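/- There are maps of R-bimodules R(-1) → B_s sending 1 ↦ Δ_s and B_s → R(1) sending f ⊗ g ↦ fg; their composite R → B_s → R is multiplication by α_s. -/
import Mathlib


open MvPolynomial

/-- The linear polynomial in `R = Sym(𝔥*)` corresponding to the element of `𝔥*`
with coordinates `φ` (identifying `𝔥` with `Fin n → k` so that `𝔥*` has dual basis
corresponding to the variables `X i`). -/
noncomputable def lin {k : Type*} [CommRing k] {n : ℕ} (φ : Fin n → k) :
    MvPolynomial (Fin n) k :=
  ∑ i, C (φ i) * X i

/-- The reflection `s` acting on `R = Sym(𝔥*)`, induced by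
`s(γ) = γ - ⟨α^∨, γ⟩·α` on `𝔥*`, where `α^∨ ∈ 𝔥` has coordinates `αv` and
`α ∈ 𝔥*` has coordinates `α`. -/
noncomputable def sRefl {k : Type*} [CommRing k] {n : ℕ} (αv α : Fin n → k) :
    MvPolynomial (Fin n) k →ₐ[k] MvPolynomial (Fin n) k :=
  aeval (fun i => X i - C (αv i) * lin α)

/-- The subalgebra `R^s` of `s`-invariants. -/
noncomputable def invSub {k : Type*} [CommRing k] {n : ℕ} (αv α : Fin n → k) :
    Subalgebra k (MvPolynomial (Fin n) k) :=
  AlgHom.equalizer (sRefl αv α) (AlgHom.id k (MvPolynomial (Fin n) k))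

open scoped TensorProduct


section Aux
variable {k : Type*} [CommRing k] {n : ℕ} (αv α : Fin n → k)

lemma sRefl_X (i : Fin n) : sRefl αv α (X i) = X i - C (αv i) * lin α := by
  simp [sRefl]

lemma sRefl_lin (φ : Fin n → k) :
    sRefl αv α (lin φ) = lin φ - C (∑ i, αv i * φ i) * lin α := by
  simp only [lin, sRefl, map_sum, map_mul, aeval_C, aeval_X, algebraMap_eq,
    Finset.sum_mul, ← Finset.sum_sub_distrib]
  refine Finset.sum_congr rfl fun i _ => by ring

set_option synthInstance.maxHeartbeats 1000000 in
set_option maxHeartbeats 2000000 in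
lemma inv_move {g : MvPolynomial (Fin n) k} (hg : g ∈ invSub αv α)
    (a b : MvPolynomial (Fin n) k) :
    (g * a) ⊗ₜ[↥(invSub αv α)] b = a ⊗ₜ[↥(invSub αv α)] (g * b) := by
  have := TensorProduct.smul_tmul (R := ↥(invSub αv α)) (⟨g, hg⟩ : ↥(invSub αv α)) a b
  simpa [Algebra.smul_def] using this

end Aux

section Main
variable {k : Type*} [CommRing k] {n : ℕ} (αv α : Fin n → k)
  (hpair : ∑ i, αv i * α i = 2) (δ : Fin n → k) (hδ : ∑ i, αv i * δ i = 1)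

include hpair hδ in

lemma sRefl_lin_δ : sRefl αv α (lin δ) = lin δ - lin α := by
  rw [sRefl_lin, hδ, C_1, one_mul]

include hpair in
lemma sRefl_lin_α : sRefl αv α (lin α) = - lin α := by
  rw [sRefl_lin, hpair]
  rw [show ((2:k) = 1 + 1) by norm_num, C_add, C_1]
  ring

include hpair hδ in
lemma e_inv : lin δ + sRefl αv α (lin δ) ∈ invSub αv α := by
  show sRefl αv α _ = _
  rw [map_add, sRefl_lin_δ αv α hpair δ hδ, map_sub, sRefl_lin_δ αv α hpair δ hδ,
    sRefl_lin_α αv α hpair]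
  simp only [AlgHom.coe_id, id_eq]
  ring

include hpair hδ in
lemma p_inv : lin δ * sRefl αv α (lin δ) ∈ invSub αv α := by
  show sRefl αv α _ = _
  rw [map_mul, sRefl_lin_δ αv α hpair δ hδ, map_sub, sRefl_lin_δ αv α hpair δ hδ,
    sRefl_lin_α αv α hpair]
  simp only [AlgHom.coe_id, id_eq]
  ring

include hpair hδ in
lemma P_inv (i : Fin n) : X i - C (αv i) * lin δ ∈ invSub αv α := by
  show sRefl αv α _ = _
  rw [map_sub, map_mul, sRefl_X, sRefl_lin_δ αv α hpair δ hδ]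
  have : sRefl αv α (C (αv i)) = C (αv i) := by simp [sRefl]
  rw [this]
  simp only [AlgHom.coe_id, id_eq]
  ring

end Main

section Main2
variable {k : Type*} [CommRing k] {n : ℕ} (αv α : Fin n → k)
  (hpair : ∑ i, αv i * α i = 2) (δ : Fin n → k) (hδ : ∑ i, αv i * δ i = 1)

open Algebra.TensorProduct TensorProduct

variable (f g : MvPolynomial (Fin n) k)

/-- abbreviation for the commutation property -/
def SProp (f : MvPolynomial (Fin n) k) : Prop :=
  (f ⊗ₜ[↥(invSub αv α)] (1 : MvPolynomial (Fin n) k)) *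
      (lin δ ⊗ₜ[↥(invSub αv α)] (1 : MvPolynomial (Fin n) k)
        - (1 : MvPolynomial (Fin n) k) ⊗ₜ[↥(invSub αv α)] sRefl αv α (lin δ)) =
    (lin δ ⊗ₜ[↥(invSub αv α)] (1 : MvPolynomial (Fin n) k)
        - (1 : MvPolynomial (Fin n) k) ⊗ₜ[↥(invSub αv α)] sRefl αv α (lin δ)) *
      ((1 : MvPolynomial (Fin n) k) ⊗ₜ[↥(invSub αv α)] f)

set_option maxHeartbeats 2000000 in
set_option synthInstance.maxHeartbeats 1000000 in
lemma comm_of_inv {g : MvPolynomial (Fin n) k} (hg : g ∈ invSub αv α) :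
    SProp αv α δ g := by
  unfold SProp
  set sδ := sRefl αv α (lin δ) with hsδ
  have e1 : (g ⊗ₜ[↥(invSub αv α)] (1:MvPolynomial (Fin n) k)) * (lin δ ⊗ₜ[↥(invSub αv α)] 1)
      = (g * lin δ) ⊗ₜ[↥(invSub αv α)] 1 := by
    rw [Algebra.TensorProduct.tmul_mul_tmul, mul_one]
  have e2 : (g ⊗ₜ[↥(invSub αv α)] (1:MvPolynomial (Fin n) k)) * (1 ⊗ₜ[↥(invSub αv α)] sδ)
      = g ⊗ₜ[↥(invSub αv α)] sδ := by
    rw [Algebra.TensorProduct.tmul_mul_tmul, mul_one, one_mul]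
  have e3 : (lin δ ⊗ₜ[↥(invSub αv α)] (1:MvPolynomial (Fin n) k)) * (1 ⊗ₜ[↥(invSub αv α)] g)
      = lin δ ⊗ₜ[↥(invSub αv α)] g := by
    rw [Algebra.TensorProduct.tmul_mul_tmul, mul_one, one_mul]
  have e4 : ((1:MvPolynomial (Fin n) k) ⊗ₜ[↥(invSub αv α)] sδ) * (1 ⊗ₜ[↥(invSub αv α)] g)
      = 1 ⊗ₜ[↥(invSub αv α)] (sδ * g) := by
    rw [Algebra.TensorProduct.tmul_mul_tmul, mul_one]
  have h1 : (g * lin δ) ⊗ₜ[↥(invSub αv α)] (1 : MvPolynomial (Fin n) k)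
      = lin δ ⊗ₜ[↥(invSub αv α)] g := by
    simpa using inv_move αv α hg (lin δ) 1
  have h2 : g ⊗ₜ[↥(invSub αv α)] sδ
      = (1 : MvPolynomial (Fin n) k) ⊗ₜ[↥(invSub αv α)] (g * sδ) := by
    simpa using inv_move αv α hg 1 sδ
  calc (g ⊗ₜ[↥(invSub αv α)] (1:MvPolynomial (Fin n) k)) *
        (lin δ ⊗ₜ[↥(invSub αv α)] 1 - 1 ⊗ₜ[↥(invSub αv α)] sδ)
      = (g ⊗ₜ[↥(invSub αv α)] (1:MvPolynomial (Fin n) k)) * (lin δ ⊗ₜ[↥(invSub αv α)] 1)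
        - (g ⊗ₜ[↥(invSub αv α)] (1:MvPolynomial (Fin n) k)) * (1 ⊗ₜ[↥(invSub αv α)] sδ) := by
        ring
    _ = lin δ ⊗ₜ[↥(invSub αv α)] g - 1 ⊗ₜ[↥(invSub αv α)] (sδ * g) := by
        rw [e1, e2, h1, h2, mul_comm g sδ]
    _ = (lin δ ⊗ₜ[↥(invSub αv α)] (1:MvPolynomial (Fin n) k)) * (1 ⊗ₜ[↥(invSub αv α)] g)
        - ((1:MvPolynomial (Fin n) k) ⊗ₜ[↥(invSub αv α)] sδ) * (1 ⊗ₜ[↥(invSub αv α)] g) := by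
        rw [e3, e4]
    _ = (lin δ ⊗ₜ[↥(invSub αv α)] 1 - 1 ⊗ₜ[↥(invSub αv α)] sδ) *
        ((1:MvPolynomial (Fin n) k) ⊗ₜ[↥(invSub αv α)] g) := by ring

lemma C_mem (r : k) : (C r : MvPolynomial (Fin n) k) ∈ invSub αv α := by
  show sRefl αv α _ = _
  simp [sRefl]

set_option maxHeartbeats 2000000 in
set_option synthInstance.maxHeartbeats 1000000 in
include hpair hδ in
lemma comm_δ : SProp αv α δ (lin δ) := by
  unfold SProp
  set sδ := sRefl αv α (lin δ) with hsδ
  have e1 : (lin δ ⊗ₜ[↥(invSub αv α)] (1:MvPolynomial (Fin n) k)) *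
      (lin δ ⊗ₜ[↥(invSub αv α)] 1) = (lin δ * lin δ) ⊗ₜ[↥(invSub αv α)] 1 := by
    rw [Algebra.TensorProduct.tmul_mul_tmul, mul_one]
  have e2 : (lin δ ⊗ₜ[↥(invSub αv α)] (1:MvPolynomial (Fin n) k)) *
      (1 ⊗ₜ[↥(invSub αv α)] sδ) = lin δ ⊗ₜ[↥(invSub αv α)] sδ := by
    rw [Algebra.TensorProduct.tmul_mul_tmul, mul_one, one_mul]
  have e3 : (lin δ ⊗ₜ[↥(invSub αv α)] (1:MvPolynomial (Fin n) k)) *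
      (1 ⊗ₜ[↥(invSub αv α)] lin δ) = lin δ ⊗ₜ[↥(invSub αv α)] lin δ := by
    rw [Algebra.TensorProduct.tmul_mul_tmul, mul_one, one_mul]
  have e4 : ((1:MvPolynomial (Fin n) k) ⊗ₜ[↥(invSub αv α)] sδ) *
      (1 ⊗ₜ[↥(invSub αv α)] lin δ) = 1 ⊗ₜ[↥(invSub αv α)] (sδ * lin δ) := by
    rw [Algebra.TensorProduct.tmul_mul_tmul, mul_one]
  have he : ((lin δ + sδ) * lin δ) ⊗ₜ[↥(invSub αv α)] (1:MvPolynomial (Fin n) k)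
      = lin δ ⊗ₜ[↥(invSub αv α)] (lin δ + sδ) := by
    simpa using inv_move αv α (e_inv αv α hpair δ hδ) (lin δ) 1
  have hp : (lin δ * sδ) ⊗ₜ[↥(invSub αv α)] (1:MvPolynomial (Fin n) k)
      = (1:MvPolynomial (Fin n) k) ⊗ₜ[↥(invSub αv α)] (lin δ * sδ) := by
    simpa using inv_move αv α (p_inv αv α hpair δ hδ) 1 1
  have key : (lin δ * lin δ) ⊗ₜ[↥(invSub αv α)] (1:MvPolynomial (Fin n) k)
      = lin δ ⊗ₜ[↥(invSub αv α)] lin δ + lin δ ⊗ₜ[↥(invSub αv α)] sδ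
        - 1 ⊗ₜ[↥(invSub αv α)] (lin δ * sδ) := by
    rw [show lin δ * lin δ = (lin δ + sδ) * lin δ - lin δ * sδ from by ring,
      TensorProduct.sub_tmul, he, hp, TensorProduct.tmul_add]
  calc (lin δ ⊗ₜ[↥(invSub αv α)] (1:MvPolynomial (Fin n) k)) *
        (lin δ ⊗ₜ[↥(invSub αv α)] 1 - 1 ⊗ₜ[↥(invSub αv α)] sδ)
      = (lin δ ⊗ₜ[↥(invSub αv α)] (1:MvPolynomial (Fin n) k)) * (lin δ ⊗ₜ[↥(invSub αv α)] 1)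
        - (lin δ ⊗ₜ[↥(invSub αv α)] (1:MvPolynomial (Fin n) k)) *
          (1 ⊗ₜ[↥(invSub αv α)] sδ) := by ring
    _ = (lin δ * lin δ) ⊗ₜ[↥(invSub αv α)] 1 - lin δ ⊗ₜ[↥(invSub αv α)] sδ := by rw [e1, e2]
    _ = lin δ ⊗ₜ[↥(invSub αv α)] lin δ - 1 ⊗ₜ[↥(invSub αv α)] (sδ * lin δ) := by
        rw [key, mul_comm sδ (lin δ)]; ring
    _ = (lin δ ⊗ₜ[↥(invSub αv α)] (1:MvPolynomial (Fin n) k)) * (1 ⊗ₜ[↥(invSub αv α)] lin δ)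
        - ((1:MvPolynomial (Fin n) k) ⊗ₜ[↥(invSub αv α)] sδ) *
          (1 ⊗ₜ[↥(invSub αv α)] lin δ) := by rw [e3, e4]
    _ = (lin δ ⊗ₜ[↥(invSub αv α)] 1 - 1 ⊗ₜ[↥(invSub αv α)] sδ) *
        ((1:MvPolynomial (Fin n) k) ⊗ₜ[↥(invSub αv α)] lin δ) := by ring

set_option maxHeartbeats 2000000 in
set_option synthInstance.maxHeartbeats 1000000 in
lemma SProp_mul {f g : MvPolynomial (Fin n) k} (hf : SProp αv α δ f) (hg : SProp αv α δ g) :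
    SProp αv α δ (f * g) := by
  unfold SProp at hf hg ⊢
  have e5 : (f * g) ⊗ₜ[↥(invSub αv α)] (1:MvPolynomial (Fin n) k)
      = (f ⊗ₜ[↥(invSub αv α)] (1:MvPolynomial (Fin n) k)) * (g ⊗ₜ[↥(invSub αv α)] 1) := by
    rw [Algebra.TensorProduct.tmul_mul_tmul, mul_one]
  have e6 : (1:MvPolynomial (Fin n) k) ⊗ₜ[↥(invSub αv α)] (f * g)
      = ((1:MvPolynomial (Fin n) k) ⊗ₜ[↥(invSub αv α)] f) * (1 ⊗ₜ[↥(invSub αv α)] g) := by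
    rw [Algebra.TensorProduct.tmul_mul_tmul, mul_one]
  rw [e5, e6]
  linear_combination (g ⊗ₜ[↥(invSub αv α)] (1:MvPolynomial (Fin n) k)) * hf
    + ((1:MvPolynomial (Fin n) k) ⊗ₜ[↥(invSub αv α)] f) * hg

set_option maxHeartbeats 2000000 in
set_option synthInstance.maxHeartbeats 1000000 in
lemma SProp_add {f g : MvPolynomial (Fin n) k} (hf : SProp αv α δ f) (hg : SProp αv α δ g) :
    SProp αv α δ (f + g) := by
  unfold SProp at hf hg ⊢
  rw [TensorProduct.add_tmul, TensorProduct.tmul_add]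
  linear_combination hf + hg

set_option maxHeartbeats 2000000 in
set_option synthInstance.maxHeartbeats 1000000 in
include hpair hδ in
lemma SProp_all (f : MvPolynomial (Fin n) k) : SProp αv α δ f := by
  induction f using MvPolynomial.induction_on with
  | C r => exact comm_of_inv αv α δ (C_mem αv α r)
  | add p q hp hq => exact SProp_add αv α δ hp hq
  | mul_X p i hp =>
      refine SProp_mul αv α δ hp ?_
      have h1 : SProp αv α δ (X i - C (αv i) * lin δ) :=
        comm_of_inv αv α δ (P_inv αv α hpair δ hδ i)
      have h2 : SProp αv α δ (C (αv i) * lin δ) :=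
        SProp_mul αv α δ (comm_of_inv αv α δ (C_mem αv α (αv i)))
          (comm_δ αv α hpair δ hδ)
      have := SProp_add αv α δ h1 h2
      simpa using this

end Main2


set_option maxHeartbeats 2000000 in
set_option synthInstance.maxHeartbeats 1000000 in
/-- There are maps of `R`-bimodules `R(-1) → B_s` sending `1 ↦ Δ_s` and
`B_s → R(1)` sending `f ⊗ g ↦ fg` (grading shifts ignored); their composite
`R → B_s → R` is multiplication by `α_s`. Here `B_s = R ⊗_{R^s} R`; the map `1 ↦ Δ_s`
being a bimodule map amounts to `f·Δ_s = Δ_s·f` for all `f`, and the multiplication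
map is the algebra map `lmul'`. -/
theorem Bs_bimodule_maps_and_composite {k : Type*} [CommRing k] [IsDomain k] {n : ℕ}
    (αv α : Fin n → k) (hpair : ∑ i, αv i * α i = 2)
    (δ : Fin n → k) (hδ : ∑ i, αv i * δ i = 1) :
    (∀ f : MvPolynomial (Fin n) k,
      (f ⊗ₜ[↥(invSub αv α)] (1 : MvPolynomial (Fin n) k)) *
          (lin δ ⊗ₜ[↥(invSub αv α)] (1 : MvPolynomial (Fin n) k)
            - (1 : MvPolynomial (Fin n) k) ⊗ₜ[↥(invSub αv α)] sRefl αv α (lin δ)) =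
        (lin δ ⊗ₜ[↥(invSub αv α)] (1 : MvPolynomial (Fin n) k)
            - (1 : MvPolynomial (Fin n) k) ⊗ₜ[↥(invSub αv α)] sRefl αv α (lin δ)) *
          ((1 : MvPolynomial (Fin n) k) ⊗ₜ[↥(invSub αv α)] f)) ∧
    (∀ f : MvPolynomial (Fin n) k,
      Algebra.TensorProduct.lmul' (R := ↥(invSub αv α))
          (S := MvPolynomial (Fin n) k)
          ((f ⊗ₜ[↥(invSub αv α)] (1 : MvPolynomial (Fin n) k)) *
            (lin δ ⊗ₜ[↥(invSub αv α)] (1 : MvPolynomial (Fin n) k)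
              - (1 : MvPolynomial (Fin n) k) ⊗ₜ[↥(invSub αv α)] sRefl αv α (lin δ))) =
        f * lin α) := by
  constructor
  · intro f
    exact SProp_all αv α hpair δ hδ f
  · intro f
    rw [map_mul, map_sub, Algebra.TensorProduct.lmul'_apply_tmul,
      Algebra.TensorProduct.lmul'_apply_tmul, Algebra.TensorProduct.lmul'_apply_tmul,
      sRefl_lin_δ αv α hpair δ hδ]
    ring
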